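/- arXiv:2011.04933 — 5 statements merged into one kernel-verified Lean document; each statement's English description precedes it below -/
import Mathlib

section
/- Let K be a finite set of scenarios with occurrence probabilities ε_k > 0. Suppose two generators i and j are located at the same bus m and for every k ∈ K satisfy the KKT stationarity conditions ε_k·C̄_k(i) − α̲_k(i) + ᾱ_k(i) − λ_k + S_k(:,m)ᵀμ_k = 0 and ε_k·C̄_k(j) − α̲_k(j) + ᾱ_k(j) − λ_k + S_k(:,m)ᵀμ_k = 0, with α̲_k(i) = α̲_k(j) = 0 for all k (since r_U(i), r_U(j) > 0) and C̄_k(i) = C̄_k(j) for all k. Then the upward reserve marginal prices are equal: η^U(i) = Σ_{k∈K} ᾱ_k(i) = Σ_{k∈K} ᾱ_k(j) = η^U(j). -/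
open Matrix BigOperators

theorem upper_multiplier_eq_of_stationarity {R : Type*} [CommRing R] {c₁ c₂ a₁ a₂ b₁ b₂ l p : R}
    (h₁ : c₁ - a₁ + b₁ - l + p = 0) (h₂ : c₂ - a₂ + b₂ - l + p = 0)
    (hc : c₁ = c₂) (ha : a₁ = a₂) : b₁ = b₂ := by
  linear_combination h₁ - h₂ - hc + ha

theorem uniform_upward_reserve_prices_general
    {ι : Type*} (K : Finset ι) {Lk : ι → ℕ}
    (εk : ι → ℝ)
    (lamk : ι → ℝ) (μk : ∀ k : ι, Fin (Lk k) → ℝ)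
    (sk : ∀ k : ι, Fin (Lk k) → ℝ)  -- column of S_k at bus m
    {G : Type*} (Cbar : ι → G → ℝ) (αlo αbar : ι → G → ℝ) (i j : G)
    (ηU : G → ℝ)
    (hηU_i : ηU i = ∑ k ∈ K, αbar k i)
    (hηU_j : ηU j = ∑ k ∈ K, αbar k j)
    (hstat_i : ∀ k ∈ K,
      εk k * Cbar k i - αlo k i + αbar k i - lamk k + sk k ⬝ᵥ μk k = 0)
    (hstat_j : ∀ k ∈ K,
      εk k * Cbar k j - αlo k j + αbar k j - lamk k + sk k ⬝ᵥ μk k = 0)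
    (hlo_i : ∀ k ∈ K, αlo k i = 0) (hlo_j : ∀ k ∈ K, αlo k j = 0)
    (hC : ∀ k ∈ K, Cbar k i = Cbar k j) :
    ηU i = ηU j := by
  rw [hηU_i, hηU_j]
  refine Finset.sum_congr rfl fun k hk => ?_
  exact upper_multiplier_eq_of_stationarity (hstat_i k hk) (hstat_j k hk)
    (congrArg (εk k * ·) (hC k hk)) ((hlo_i k hk).trans (hlo_j k hk).symm)

/-- Uniform upward reserve pricing: two generators at the same bus satisfying
the scenario-wise KKT stationarity conditions, with vanishing lower-bound
multipliers and equal upward re-dispatch prices in every scenario, receive the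
same upward reserve marginal price `η^U(·) = Σ_k ᾱ_k(·)`. -/
theorem uniform_upward_reserve_prices
    {ι : Type*} (K : Finset ι) {Lk : ι → ℕ}
    (εk : ι → ℝ) (hεk : ∀ k ∈ K, 0 < εk k)
    (lamk : ι → ℝ) (μk : ∀ k : ι, Fin (Lk k) → ℝ)
    (sk : ∀ k : ι, Fin (Lk k) → ℝ)  -- column of S_k at bus m
    {G : Type*} (Cbar : ι → G → ℝ) (αlo αbar : ι → G → ℝ) (i j : G)
    (ηU : G → ℝ)
    (hηU_i : ηU i = ∑ k ∈ K, αbar k i)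
    (hηU_j : ηU j = ∑ k ∈ K, αbar k j)
    (hstat_i : ∀ k ∈ K,
      εk k * Cbar k i - αlo k i + αbar k i - lamk k + sk k ⬝ᵥ μk k = 0)
    (hstat_j : ∀ k ∈ K,
      εk k * Cbar k j - αlo k j + αbar k j - lamk k + sk k ⬝ᵥ μk k = 0)
    (hlo_i : ∀ k ∈ K, αlo k i = 0) (hlo_j : ∀ k ∈ K, αlo k j = 0)
    (hC : ∀ k ∈ K, Cbar k i = Cbar k j) :
    ηU i = ηU j :=
  uniform_upward_reserve_prices_general K εk lamk μk sk Cbar αlo αbar i j ηU hηU_i hηU_j hstat_i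
    hstat_j hlo_i hlo_j hC
end

section
/- Let B ∈ ℝ^{n×n} be a symmetric matrix whose kernel is spanned by the all-ones vector 𝟙 ∈ ℝ^n, let S ∈ ℝ^{L×n} and F ∈ ℝ^{L×n} with F = S·B. If Λ ∈ ℝ^n and μ ∈ ℝ^L satisfy the stationarity condition BᵀΛ + Fᵀμ = 0, then there exists a scalar λ ∈ ℝ such that Λ = λ·𝟙 − Sᵀμ. -/
open Matrix

theorem Matrix.transpose_mulVec_add_transpose_mul_mulVec {l m n R : Type*} [Fintype l]
    [Fintype m] [CommSemiring R] (B : Matrix m n R) (S : Matrix l m R) (x : m → R)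
    (y : l → R) : Bᵀ *ᵥ x + (S * B)ᵀ *ᵥ y = Bᵀ *ᵥ (x + Sᵀ *ᵥ y) := by
  rw [transpose_mul, ← mulVec_mulVec, mulVec_add]

/-- Equivalence of nodal prices in the phase-angle and shift-factor
formulations: if `B` is symmetric with kernel spanned by the all-ones vector,
`F = S * B`, and `BᵀΛ + Fᵀμ = 0`, then `Λ = λ·𝟙 - Sᵀμ` for some scalar `λ`. -/
theorem nodal_price_decomposition
    {n L : ℕ}
    (B : Matrix (Fin n) (Fin n) ℝ) (hBsym : Bᵀ = B)
    (hker : ∀ v : Fin n → ℝ, B *ᵥ v = 0 ↔ ∃ c : ℝ, v = c • (fun _ => (1 : ℝ)))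
    (S F : Matrix (Fin L) (Fin n) ℝ) (hF : F = S * B)
    (Λ : Fin n → ℝ) (μ : Fin L → ℝ)
    (hstat : Bᵀ *ᵥ Λ + Fᵀ *ᵥ μ = 0) :
    ∃ lam : ℝ, Λ = lam • (fun _ => (1 : ℝ)) - Sᵀ *ᵥ μ := by
  have hmem_ker : B *ᵥ (Λ + Sᵀ *ᵥ μ) = 0 := by
    rw [← hBsym, ← transpose_mulVec_add_transpose_mul_mulVec, ← hF, hstat]
  obtain ⟨lam, hlam⟩ := (hker _).mp hmem_ker
  exact ⟨lam, eq_sub_of_add_eq hlam⟩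
end

section
/- Fix a scenario k with occurrence probability ε_k > 0 and a generator j located at bus m, with s = S_k(:,m) ∈ ℝ^{L_k}, μ_k ∈ ℝ^{L_k}, λ_k ∈ ℝ. Let r_U(j) ≥ 0 be its procured upward reserve and x_k(j) ∈ [0,1] the ratio of its scenario-k upward re-dispatch to r_U(j). Assume: (i) stationarity ε_k·C̄_k(j) − α̲_k(j) + ᾱ_k(j) − λ_k + sᵀμ_k = 0; (ii) complementary slackness ᾱ_k(j)·(x_k(j)·r_U(j) − r_U(j)) = 0; (iii) complementary slackness α̲_k(j)·x_k(j)·r_U(j) = 0. Then ᾱ_k(j)·r_U(j) = (−ε_k·C̄_k(j) + λ_k − sᵀμ_k)·x_k(j)·r_U(j); i.e., the scenario-k contribution to generator j's upward reserve credit equals the net value of its deployed upward re-dispatch. -/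
open Matrix

theorem upward_reserve_credit_identity_general
    {Lk : ℕ} (εk : ℝ)
    (s : Fin Lk → ℝ) (μk : Fin Lk → ℝ) (lamk : ℝ)
    (rU : ℝ)
    (xk : ℝ)
    (Cbar αlo αbar : ℝ)
    (hstat : εk * Cbar - αlo + αbar - lamk + s ⬝ᵥ μk = 0)
    (hcs_up : αbar * (xk * rU - rU) = 0)
    (hcs_lo : αlo * (xk * rU) = 0) :
    αbar * rU = (-εk * Cbar + lamk - s ⬝ᵥ μk) * (xk * rU) := by
  -- Multiply stationarity by the deployed re-dispatch `xk * rU`: the upper slackness turns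
  -- `αbar * (xk * rU)` into `αbar * rU`, and the lower slackness removes the `αlo` term.
  linear_combination (xk * rU) * hstat - hcs_up + hcs_lo

/-- The scenario-k contribution to generator j's upward reserve credit equals
the net value of its deployed upward re-dispatch:
`ᾱ_k(j)·r_U(j) = (-ε_k·C̄_k(j) + λ_k - sᵀμ_k)·x_k(j)·r_U(j)`. -/
theorem upward_reserve_credit_identity
    {Lk : ℕ} (εk : ℝ) (hεk : 0 < εk)
    (s : Fin Lk → ℝ) (μk : Fin Lk → ℝ) (lamk : ℝ)
    (rU : ℝ) (hrU : 0 ≤ rU)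
    (xk : ℝ) (hxk : xk ∈ Set.Icc (0 : ℝ) 1)
    (Cbar αlo αbar : ℝ)
    (hstat : εk * Cbar - αlo + αbar - lamk + s ⬝ᵥ μk = 0)
    (hcs_up : αbar * (xk * rU - rU) = 0)
    (hcs_lo : αlo * (xk * rU) = 0) :
    αbar * rU = (-εk * Cbar + lamk - s ⬝ᵥ μk) * (xk * rU) :=
  upward_reserve_credit_identity_general εk s μk lamk rU xk Cbar αlo αbar hstat hcs_up hcs_lo
end

section
/- Fix a scenario k with occurrence probability ε_k > 0 and a generator j located at bus m, with s = S_k(:,m) ∈ ℝ^{L_k}, μ_k ∈ ℝ^{L_k}, λ_k ∈ ℝ. Let r_D(j) ≥ 0 be its procured downward reserve and y_k(j) ∈ [0,1] the ratio of its scenario-k downward re-dispatch to r_D(j). Assume: (i) stationarity −ε_k·C̲_k(j) − β̲_k(j) + β̄_k(j) + λ_k − sᵀμ_k = 0; (ii) complementary slackness β̄_k(j)·(y_k(j)·r_D(j) − r_D(j)) = 0; (iii) complementary slackness β̲_k(j)·y_k(j)·r_D(j) = 0. Then β̄_k(j)·r_D(j) = (ε_k·C̲_k(j) − λ_k + sᵀμ_k)·y_k(j)·r_D(j);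 i.e., the scenario-k contribution to generator j's downward reserve credit equals the net value of its deployed downward re-dispatch. -/
open Matrix

theorem box_multiplier_mul_bound_eq {R : Type*} [CommRing R] {βlo βbar c x u : R}
    (hstat : βbar - βlo = c) (hup : βbar * (x - u) = 0) (hlo : βlo * x = 0) :
    βbar * u = c * x := by
  -- βbar·u = βbar·x = (c + βlo)·x = c·x
  linear_combination -hup + hlo + x * hstat

theorem downward_reserve_credit_identity_general
    {Lk : ℕ} (εk : ℝ)
    (s : Fin Lk → ℝ) (μk : Fin Lk → ℝ) (lamk : ℝ)
    (rD : ℝ)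
    (yk : ℝ)
    (Cund βlo βbar : ℝ)
    (hstat : -εk * Cund - βlo + βbar + lamk - s ⬝ᵥ μk = 0)
    (hcs_up : βbar * (yk * rD - rD) = 0)
    (hcs_lo : βlo * (yk * rD) = 0) :
    βbar * rD = (εk * Cund - lamk + s ⬝ᵥ μk) * (yk * rD) :=
  box_multiplier_mul_bound_eq (by linear_combination hstat) hcs_up hcs_lo

/-- The scenario-k contribution to generator j's downward reserve credit equals
the net value of its deployed downward re-dispatch:
`β̄_k(j)·r_D(j) = (ε_k·C̲_k(j) - λ_k + sᵀμ_k)·y_k(j)·r_D(j)`. -/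
theorem downward_reserve_credit_identity
    {Lk : ℕ} (εk : ℝ) (hεk : 0 < εk)
    (s : Fin Lk → ℝ) (μk : Fin Lk → ℝ) (lamk : ℝ)
    (rD : ℝ) (hrD : 0 ≤ rD)
    (yk : ℝ) (hyk : yk ∈ Set.Icc (0 : ℝ) 1)
    (Cund βlo βbar : ℝ)
    (hstat : -εk * Cund - βlo + βbar + lamk - s ⬝ᵥ μk = 0)
    (hcs_up : βbar * (yk * rD - rD) = 0)
    (hcs_lo : βlo * (yk * rD) = 0) :
    βbar * rD = (εk * Cund - lamk + s ⬝ᵥ μk) * (yk * rD) :=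
  downward_reserve_credit_identity_general εk s μk lamk rD yk Cund βlo βbar hstat hcs_up hcs_lo
end

section
/- Fix a scenario k with occurrence probability ε_k > 0. Let there be N_g generators with bus-assignment columns s_j ∈ ℝ^{L_k} (the column of S_k at generator j's bus) and N_l loads with columns s_l ∈ ℝ^{L_k}; let g(j), r_U(j), r_D(j) ≥ 0, x_k(j), y_k(j) ∈ [0,1], d(l), π_k(l), δd_k(l) ∈ ℝ, λ_k ∈ ℝ, μ_k ∈ ℝ^{L_k}, f_k ∈ ℝ^{L_k}, and prices C̄_k(j), C̲_k(j), C_L(l), and multipliers ᾱ_k(j), β̄_k(j). Assume: (i) for every load l, ε_k·C_L(l) − λ_k + s_lᵀμ_k = 0; (ii) for every generator j, ᾱ_k(j)·r_U(j) = (−ε_k·C̄_k(j) + λ_k − s_jᵀμ_k)·x_k(j)·r_U(j) and β̄_k(j)·r_D(j) = (ε_k·C̲_k(j) − λ_k + s_jᵀμ_k)·y_k(j)·r_D(j); (iii) total balance Σ_j (g(j) + x_k(j)·r_U(j) − y_k(j)·r_D(j)) = Σ_l (d(l) + π_k(l) − δd_k(l)); (iv) the congestion rent identity f_kᵀμ_k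 = Σ_j s_jᵀμ_k·(g(j) + x_k(j)·r_U(j) − y_k(j)·r_D(j)) − Σ_l s_lᵀμ_k·(d(l) + π_k(l) − δd_k(l)). Then the scenario-k settlement balances: Σ_l (λ_k − s_lᵀμ_k)·(d(l) + π_k(l)) = Σ_j (λ_k − s_jᵀμ_k)·g(j) + Σ_j ᾱ_k(j)·r_U(j) + Σ_j β̄_k(j)·r_D(j) + ε_k·Σ_j C̄_k(j)·x_k(j)·r_U(j) − ε_k·Σ_j C̲_k(j)·y_k(j)·r_D(j) + ε_k·Σ_l C_L(l)·δd_k(l) + f_kᵀμ_k. -/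
/-!
With nodal prices `ρ = λ - sᵀμ`, the merchandising surplus (payments by net withdrawals minus
credits to net injections at nodal prices) equals `λ · (withdrawals - injections)` plus the
congestion rent, and the first term vanishes by power balance. The optimality conditions then
price the re-dispatches and the shed load at nodal prices, turning the surplus identity into the
settlement identity.
-/

open Matrix Finset

theorem sum_sub_mul_eq_sum_sub_mul_add_sub {R ι κ : Type*} [CommRing R] [Fintype ι] [Fintype κ]
    (lam : R) (a p : ι → R) (b q : κ → R) (hbal : ∑ i, p i = ∑ k, q k) :
    ∑ k, (lam - b k) * q k =
      ∑ i, (lam - a i) * p i + (∑ i, a i * p i - ∑ k, b k * q k) := by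
  simp only [sub_mul, sum_sub_distrib, ← mul_sum, hbal]
  ring

theorem scenario_settlement_balance_general
    {Lk Ng Nl : ℕ} (εk : ℝ)
    (sG : Fin Ng → Fin Lk → ℝ) (sL : Fin Nl → Fin Lk → ℝ)
    (g rU rD : Fin Ng → ℝ)
    (xk yk : Fin Ng → ℝ)
    (d πk δdk : Fin Nl → ℝ)
    (lamk : ℝ) (μk : Fin Lk → ℝ) (fk : Fin Lk → ℝ)
    (Cbar Cund : Fin Ng → ℝ) (CL : Fin Nl → ℝ)
    (αbar βbar : Fin Ng → ℝ)
    (hshed : ∀ l, εk * CL l - lamk + sL l ⬝ᵥ μk = 0)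
    (hup : ∀ j, αbar j * rU j =
      (-εk * Cbar j + lamk - sG j ⬝ᵥ μk) * (xk j * rU j))
    (hdown : ∀ j, βbar j * rD j =
      (εk * Cund j - lamk + sG j ⬝ᵥ μk) * (yk j * rD j))
    (hbal : ∑ j, (g j + xk j * rU j - yk j * rD j) =
      ∑ l, (d l + πk l - δdk l))
    (hrent : fk ⬝ᵥ μk =
      ∑ j, (sG j ⬝ᵥ μk) * (g j + xk j * rU j - yk j * rD j) -
      ∑ l, (sL l ⬝ᵥ μk) * (d l + πk l - δdk l)) :
    ∑ l, (lamk - sL l ⬝ᵥ μk) * (d l + πk l) =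
      ∑ j, (lamk - sG j ⬝ᵥ μk) * g j +
      ∑ j, αbar j * rU j + ∑ j, βbar j * rD j +
      εk * ∑ j, Cbar j * (xk j * rU j) -
      εk * ∑ j, Cund j * (yk j * rD j) +
      εk * ∑ l, CL l * δdk l +
      fk ⬝ᵥ μk := by
  have surplus := sum_sub_mul_eq_sum_sub_mul_add_sub lamk (fun j ↦ sG j ⬝ᵥ μk)
    (fun j ↦ g j + xk j * rU j - yk j * rD j) (fun l ↦ sL l ⬝ᵥ μk)
    (fun l ↦ d l + πk l - δdk l) hbal
  rw [← hrent] at surplus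
  have up : ∑ j, (lamk - sG j ⬝ᵥ μk) * (xk j * rU j) =
      ∑ j, αbar j * rU j + εk * ∑ j, Cbar j * (xk j * rU j) := by
    rw [mul_sum, ← sum_add_distrib]
    exact sum_congr rfl fun j _ ↦ by linear_combination -hup j
  have down : ∑ j, (lamk - sG j ⬝ᵥ μk) * (yk j * rD j) =
      εk * ∑ j, Cund j * (yk j * rD j) - ∑ j, βbar j * rD j := by
    rw [mul_sum, ← sum_sub_distrib]
    exact sum_congr rfl fun j _ ↦ by linear_combination hdown j
  have shed : ∑ l, (lamk - sL l ⬝ᵥ μk) * δdk l = εk * ∑ l, CL l * δdk l := by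
    rw [mul_sum]
    exact sum_congr rfl fun l _ ↦ by linear_combination -δdk l * hshed l
  simp only [mul_sub, mul_add, sum_sub_distrib, sum_add_distrib] at surplus up down shed ⊢
  linarith

/-- Scenario-k settlement balance: the scenario-k contribution to load payment
(energy plus fluctuation) equals the scenario-k generator energy credit plus
reserve credits plus expected net re-dispatch compensation plus expected load
shedding credit plus the scenario-k congestion rent. -/
theorem scenario_settlement_balance
    {Lk Ng Nl : ℕ} (εk : ℝ) (hεk : 0 < εk)
    (sG : Fin Ng → Fin Lk → ℝ) (sL : Fin Nl → Fin Lk → ℝ)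
    (g rU rD : Fin Ng → ℝ) (hg : ∀ j, 0 ≤ g j)
    (hrU : ∀ j, 0 ≤ rU j) (hrD : ∀ j, 0 ≤ rD j)
    (xk yk : Fin Ng → ℝ)
    (hxk : ∀ j, xk j ∈ Set.Icc (0 : ℝ) 1) (hyk : ∀ j, yk j ∈ Set.Icc (0 : ℝ) 1)
    (d πk δdk : Fin Nl → ℝ)
    (lamk : ℝ) (μk : Fin Lk → ℝ) (fk : Fin Lk → ℝ)
    (Cbar Cund : Fin Ng → ℝ) (CL : Fin Nl → ℝ)
    (αbar βbar : Fin Ng → ℝ)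
    (hshed : ∀ l, εk * CL l - lamk + sL l ⬝ᵥ μk = 0)
    (hup : ∀ j, αbar j * rU j =
      (-εk * Cbar j + lamk - sG j ⬝ᵥ μk) * (xk j * rU j))
    (hdown : ∀ j, βbar j * rD j =
      (εk * Cund j - lamk + sG j ⬝ᵥ μk) * (yk j * rD j))
    (hbal : ∑ j, (g j + xk j * rU j - yk j * rD j) =
      ∑ l, (d l + πk l - δdk l))
    (hrent : fk ⬝ᵥ μk =
      ∑ j, (sG j ⬝ᵥ μk) * (g j + xk j * rU j - yk j * rD j) -
      ∑ l, (sL l ⬝ᵥ μk) * (d l + πk l - δdk l)) :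
    ∑ l, (lamk - sL l ⬝ᵥ μk) * (d l + πk l) =
      ∑ j, (lamk - sG j ⬝ᵥ μk) * g j +
      ∑ j, αbar j * rU j + ∑ j, βbar j * rD j +
      εk * ∑ j, Cbar j * (xk j * rU j) -
      εk * ∑ j, Cund j * (yk j * rD j) +
      εk * ∑ l, CL l * δdk l +
      fk ⬝ᵥ μk :=
  scenario_settlement_balance_general εk sG sL g rU rD xk yk d πk δdk lamk μk fk Cbar Cund CL αbar
    βbar hshed hup hdown hbal hrent
end
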